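/- arXiv:2312.17618 — 3 statements merged into one kernel-verified Lean document; each statement's English description precedes it below -/
import Mathlib

section
/- Let T : E → E be a bounded A-linear operator, ξ a real number, and {f_k}_{k∈ℕ} a sequence in E such that for every f ∈ E the series ∑_k ⟨f,f_k⟩·f_k converges in E and ∑_k ⟨f,f_k⟩·f_k = T f + ξ·f. Then {f_k}_{k∈ℕ} is a Bessel sequence with bound ‖T‖ + |ξ|, i.e. ‖∑_k ⟨f,f_k⟩⟨f_k,f⟩‖ ≤ (‖T‖ + |ξ|)·‖⟨f,f⟩‖ for all f ∈ E. -/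
open scoped RightActions

/-- The definition of `CStarModule` as it stood in Mathlib of December 2024 (right action of
`Aᵐᵒᵖ`, inner product `A`-linear on the right: `⟪x, y <• a⟫ = ⟪x, y⟫ * a`). -/
class CStarModuleRight (A E : Type*) [NonUnitalSemiring A] [StarRing A] [Module ℂ A]
    [AddCommGroup E] [Module ℂ E] [PartialOrder A] [SMul Aᵐᵒᵖ E] [Norm A] [Norm E]
    extends Inner A E where
  inner_add_right {x} {y} {z} : inner x (y + z) = inner x y + inner x z
  inner_self_nonneg {x} : 0 ≤ inner x x
  inner_self {x} : inner x x = 0 ↔ x = 0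
  inner_op_smul_right {a : A} {x y : E} : inner x (y <• a) = inner x y * a
  inner_smul_right_complex {z : ℂ} {x} {y} : inner x (z • y) = z • inner x y
  star_inner x y : star (inner x y) = inner y x
  norm_eq_sqrt_norm_inner_self x : ‖x‖ = Real.sqrt ‖inner x x‖

/-!
Pairing the defining identity `∑ₖ f k <• ⟪f k, g⟫ = T g + ξ • g` with `g` on the left (the inner
product is continuous and `A`-linear on the right) shows that `∑ₖ ⟪g, f k⟫ ⟪f k, g⟫` converges to
`⟪g, T g⟫ + ξ ⟪g, g⟫`. Cauchy–Schwarz and `‖g‖² = ‖⟪g, g⟫‖` bound the first term by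
`‖T‖ ‖⟪g, g⟫‖`.
-/

namespace CStarModuleRight

section Norm

variable {A E : Type*} [NonUnitalCStarAlgebra A] [PartialOrder A]
  [AddCommGroup E] [Module ℂ E] [SMul Aᵐᵒᵖ E] [Norm E] [CStarModuleRight A E]

variable (A) in
theorem norm_sq_eq (x : E) : ‖x‖ ^ 2 = ‖inner A x x‖ := by
  rw [norm_eq_sqrt_norm_inner_self (A := A), Real.sq_sqrt (norm_nonneg _)]

theorem inner_real_smul_right (r : ℝ) (x y : E) : inner A x (r • y) = r • inner A x y := by
  rw [← Complex.coe_smul, inner_smul_right_complex, Complex.coe_smul]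

variable [StarOrderedRing A]

-- Lets the Cauchy–Schwarz inequality and `innerSL` of Mathlib's `CStarModule` apply here.
instance toCStarModuleMulOpposite : CStarModule Aᵐᵒᵖ E where
  inner x y := MulOpposite.op (inner A x y)
  inner_add_right := by simp only [inner_add_right, MulOpposite.op_add, implies_true]
  inner_self_nonneg := MulOpposite.op_nonneg.mpr inner_self_nonneg
  inner_self := MulOpposite.op_eq_zero_iff _ |>.trans inner_self
  inner_op_smul_right {a x y} := by
    simpa only [MulOpposite.op_unop, MulOpposite.op_mul] using
      congrArg MulOpposite.op (inner_op_smul_right (A := A) (a := a.unop) (x := x) (y := y))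
  inner_smul_right_complex := by
    simp only [inner_smul_right_complex, MulOpposite.op_smul, implies_true]
  star_inner x y := by rw [← MulOpposite.op_star, star_inner]
  norm_eq_sqrt_norm_inner_self x := by
    rw [MulOpposite.norm_op, norm_eq_sqrt_norm_inner_self (A := A)]

theorem norm_inner_le (x y : E) : ‖inner A x y‖ ≤ ‖x‖ * ‖y‖ := by
  rw [← MulOpposite.norm_op]
  exact CStarModule.norm_inner_le E (A := Aᵐᵒᵖ)

end Norm

variable {A E : Type*} [NonUnitalCStarAlgebra A] [PartialOrder A] [StarOrderedRing A]
  [NormedAddCommGroup E] [NormedSpace ℂ E] [SMul Aᵐᵒᵖ E] [CStarModuleRight A E]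

variable (A) in
theorem hasSum_inner_right {ι : Type*} {u : ι → E} {s : E} (h : HasSum u s) (x : E) :
    HasSum (fun i => inner A x (u i)) (inner A x s) :=
  (h.mapL (CStarModule.innerSL (A := Aᵐᵒᵖ) x)).unop

theorem norm_inner_apply_self_le (T : E →L[ℂ] E) (x : E) :
    ‖inner A x (T x)‖ ≤ ‖T‖ * ‖inner A x x‖ :=
  calc ‖inner A x (T x)‖ ≤ ‖x‖ * (‖T‖ * ‖x‖) := by
        grw [norm_inner_le, T.le_opNorm x]
    _ = ‖T‖ * ‖inner A x x‖ := by rw [← norm_sq_eq A]; ring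

end CStarModuleRight

theorem bessel_of_frame_operator_eq_bounded_plus_scalar_general
    {A E : Type*} [CStarAlgebra A] [PartialOrder A] [StarOrderedRing A]
    [NormedAddCommGroup E] [NormedSpace ℂ E] [SMul Aᵐᵒᵖ E] [CStarModuleRight A E]
    -- `T` is a bounded `A`-linear operator:
    (T : E →L[ℂ] E)
    (ξ : ℝ) (f : ℕ → E)
    -- `∑ₖ ⟨f, f k⟩ · f k = T g + ξ • g` for every `g`:
    (hsum : ∀ g : E, HasSum (fun k => (f k) <• (inner A (f k) g : A)) (T g + ξ • g)) :
    ∀ g : E, Summable (fun k => (inner A g (f k) : A) * inner A (f k) g) ∧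
      ‖∑' k, (inner A g (f k) : A) * inner A (f k) g‖ ≤ (‖T‖ + |ξ|) * ‖(inner A g g : A)‖ := by
  intro g
  have hpair : HasSum (fun k => inner A g (f k) * inner A (f k) g)
      (inner A g (T g) + ξ • inner A g g) := by
    simpa only [CStarModuleRight.inner_op_smul_right, CStarModuleRight.inner_add_right,
      CStarModuleRight.inner_real_smul_right] using
      CStarModuleRight.hasSum_inner_right A (hsum g) g
  refine ⟨hpair.summable, ?_⟩
  calc ‖∑' k, inner A g (f k) * inner A (f k) g‖
      ≤ ‖inner A g (T g)‖ + ‖ξ • inner A g g‖ := hpair.tsum_eq ▸ norm_add_le _ _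
    _ ≤ ‖T‖ * ‖inner A g g‖ + |ξ| * ‖inner A g g‖ := by
        rw [norm_smul, Real.norm_eq_abs]
        gcongr
        exact CStarModuleRight.norm_inner_apply_self_le T g
    _ = (‖T‖ + |ξ|) * ‖inner A g g‖ := by ring

/-- Let `T : E → E` be a bounded `A`-linear operator on a Hilbert C⋆-module `E` over a
unital C⋆-algebra `A`, let `ξ` be a real number, and let `{f k}_{k ∈ ℕ}` be a sequence
in `E` such that for every `f ∈ E` the series `∑ₖ ⟨f, f k⟩ · f k` converges and equals
`T f + ξ • f`.  Then `{f k}` is a Bessel sequence with bound `‖T‖ + |ξ|`, i.e.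
`‖∑ₖ ⟨f, f k⟩⟨f k, f⟩‖ ≤ (‖T‖ + |ξ|) * ‖⟨f, f⟩‖` for all `f`. -/
theorem bessel_of_frame_operator_eq_bounded_plus_scalar
    {A E : Type*} [CStarAlgebra A] [PartialOrder A] [StarOrderedRing A]
    [NormedAddCommGroup E] [NormedSpace ℂ E] [SMul Aᵐᵒᵖ E] [CStarModuleRight A E]
    -- `T` is a bounded `A`-linear operator:
    (T : E →L[ℂ] E) (hTA : ∀ (a : A) (x : E), T (x <• a) = (T x) <• a)
    (ξ : ℝ) (f : ℕ → E)
    -- `∑ₖ ⟨f, f k⟩ · f k = T g + ξ • g` for every `g`: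
    (hsum : ∀ g : E, HasSum (fun k => (f k) <• (inner A (f k) g : A)) (T g + ξ • g)) :
    ∀ g : E, Summable (fun k => (inner A g (f k) : A) * inner A (f k) g) ∧
      ‖∑' k, (inner A g (f k) : A) * inner A (f k) g‖ ≤ (‖T‖ + |ξ|) * ‖(inner A g g : A)‖ :=
  bessel_of_frame_operator_eq_bounded_plus_scalar_general T ξ f hsum
end

section
/- Let {f_k}_{k∈ℕ} be a frame for H with bounds A and B, let {g_k}_{k∈ℕ} be a Bessel sequence in H, and suppose that for some μ > 0 one has (∑_k |⟨f, f_k⟩ − ⟨f, g_k⟩|²)^{1/2} ≤ μ‖f‖ for every f ∈ H (i.e., {g_k} is a μ-perturbation of {f_k}). If μ < √A, then {g_k}_{k∈ℕ} is a frame for H with bounds (√A − μ)² and (μ + √B)². -/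
/-!
The analysis sequences `(⟨x, f k⟩)ₖ` and `(⟨x, g k⟩)ₖ` lie in `ℓ²`, and the perturbation
hypothesis says their `ℓ²`-distance is at most `μ‖x‖`. By the reverse triangle inequality in
`ℓ²`, the `ℓ²`-norm of the second lies within `μ‖x‖` of that of the first, which lies between
`√A‖x‖` and `√B‖x‖`; squaring gives the frame bounds for `{g k}`.
-/

section

variable {ι E : Type*} [NormedAddCommGroup E]

theorem lp.norm_two_eq_sqrt_tsum (f : lp (fun _ : ι => E) 2) :
    ‖f‖ = √(∑' i, ‖f i‖ ^ 2) := by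
  rw [lp.norm_eq_tsum_rpow (by norm_num) f, Real.sqrt_eq_rpow]
  norm_num

theorem abs_sqrt_tsum_norm_sq_sub_le {a b : ι → E}
    (ha : Summable fun i => ‖a i‖ ^ 2) (hb : Summable fun i => ‖b i‖ ^ 2) :
    |√(∑' i, ‖a i‖ ^ 2) - √(∑' i, ‖b i‖ ^ 2)| ≤ √(∑' i, ‖a i - b i‖ ^ 2) := by
  let a' : lp (fun _ : ι => E) 2 := ⟨a, memℓp_gen (by simpa using ha)⟩
  let b' : lp (fun _ : ι => E) 2 := ⟨b, memℓp_gen (by simpa using hb)⟩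
  simpa only [lp.norm_two_eq_sqrt_tsum, lp.coeFn_sub, Pi.sub_apply] using
    abs_norm_sub_norm_le a' b'

end

theorem Real.sqrt_mul_norm_sq {E : Type*} [SeminormedAddGroup E] (c : ℝ) (x : E) :
    √(c * ‖x‖ ^ 2) = √c * ‖x‖ := by
  rw [Real.sqrt_mul' c (sq_nonneg _), Real.sqrt_sq (norm_nonneg x)]

theorem perturbation_of_frame_is_frame_general
    {H : Type*} [NormedAddCommGroup H] [InnerProductSpace ℂ H]
    (f g : ℕ → H) (A B : ℝ)
    -- `{f k}` is a frame with bounds `A` and `B`: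
    (hfsum : ∀ x : H, Summable (fun k => ‖(inner ℂ x (f k) : ℂ)‖ ^ 2))
    (hflow : ∀ x : H, A * ‖x‖ ^ 2 ≤ ∑' k, ‖(inner ℂ x (f k) : ℂ)‖ ^ 2)
    (hfup : ∀ x : H, ∑' k, ‖(inner ℂ x (f k) : ℂ)‖ ^ 2 ≤ B * ‖x‖ ^ 2)
    -- `{g k}` is a Bessel sequence:
    (hgsum : ∀ x : H, Summable (fun k => ‖(inner ℂ x (g k) : ℂ)‖ ^ 2))
    -- `{g k}` is a `μ`-perturbation of `{f k}`:
    (μ : ℝ)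
    (hpert : ∀ x : H,
      Real.sqrt (∑' k, ‖(inner ℂ x (f k) : ℂ) - inner ℂ x (g k)‖ ^ 2) ≤ μ * ‖x‖)
    (hμA : μ < Real.sqrt A) :
    ∀ x : H, (Real.sqrt A - μ) ^ 2 * ‖x‖ ^ 2 ≤ ∑' k, ‖(inner ℂ x (g k) : ℂ)‖ ^ 2 ∧
      ∑' k, ‖(inner ℂ x (g k) : ℂ)‖ ^ 2 ≤ (μ + Real.sqrt B) ^ 2 * ‖x‖ ^ 2 := by
  intro x
  have hf_low : √A * ‖x‖ ≤ √(∑' k, ‖(inner ℂ x (f k) : ℂ)‖ ^ 2) :=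
    Real.sqrt_mul_norm_sq A x ▸ Real.sqrt_le_sqrt (hflow x)
  have hf_up : √(∑' k, ‖(inner ℂ x (f k) : ℂ)‖ ^ 2) ≤ √B * ‖x‖ :=
    Real.sqrt_mul_norm_sq B x ▸ Real.sqrt_le_sqrt (hfup x)
  obtain ⟨hg_up, hg_low⟩ := abs_le.mp <|
    (abs_sqrt_tsum_norm_sq_sub_le (hfsum x) (hgsum x)).trans (hpert x)
  have h_low_nonneg : 0 ≤ (√A - μ) * ‖x‖ := mul_nonneg (by linarith) (norm_nonneg x)
  constructor
  · rw [← mul_pow, ← Real.le_sqrt h_low_nonneg (tsum_nonneg fun _ => sq_nonneg _)]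
    linarith
  · rw [← mul_pow]
    refine (Real.sqrt_le_iff.mp ?_).2
    linarith

/-- Let `{f k}` be a frame for a complex Hilbert space `H` with bounds `A` and `B`, let
`{g k}` be a Bessel sequence in `H`, and suppose that for some `μ > 0` one has
`(∑ₖ |⟨x, f k⟩ − ⟨x, g k⟩|²)^{1/2} ≤ μ‖x‖` for every `x` (i.e. `{g k}` is a
`μ`-perturbation of `{f k}`).  If `μ < √A`, then `{g k}` is a frame for `H` with
bounds `(√A − μ)²` and `(μ + √B)²`. -/
theorem perturbation_of_frame_is_frame
    {H : Type*} [NormedAddCommGroup H] [InnerProductSpace ℂ H] [CompleteSpace H]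
    (f g : ℕ → H) (A B : ℝ) (hA : 0 < A) (hAB : A ≤ B)
    -- `{f k}` is a frame with bounds `A` and `B`:
    (hfsum : ∀ x : H, Summable (fun k => ‖(inner ℂ x (f k) : ℂ)‖ ^ 2))
    (hflow : ∀ x : H, A * ‖x‖ ^ 2 ≤ ∑' k, ‖(inner ℂ x (f k) : ℂ)‖ ^ 2)
    (hfup : ∀ x : H, ∑' k, ‖(inner ℂ x (f k) : ℂ)‖ ^ 2 ≤ B * ‖x‖ ^ 2)
    -- `{g k}` is a Bessel sequence:
    (B' : ℝ) (hB' : 0 < B')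
    (hgsum : ∀ x : H, Summable (fun k => ‖(inner ℂ x (g k) : ℂ)‖ ^ 2))
    (hgB : ∀ x : H, ∑' k, ‖(inner ℂ x (g k) : ℂ)‖ ^ 2 ≤ B' * ‖x‖ ^ 2)
    -- `{g k}` is a `μ`-perturbation of `{f k}`:
    (μ : ℝ) (hμ : 0 < μ)
    (hpertsum : ∀ x : H, Summable (fun k => ‖(inner ℂ x (f k) : ℂ) - inner ℂ x (g k)‖ ^ 2))
    (hpert : ∀ x : H,
      Real.sqrt (∑' k, ‖(inner ℂ x (f k) : ℂ) - inner ℂ x (g k)‖ ^ 2) ≤ μ * ‖x‖)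
    (hμA : μ < Real.sqrt A) :
    ∀ x : H, (Real.sqrt A - μ) ^ 2 * ‖x‖ ^ 2 ≤ ∑' k, ‖(inner ℂ x (g k) : ℂ)‖ ^ 2 ∧
      ∑' k, ‖(inner ℂ x (g k) : ℂ)‖ ^ 2 ≤ (μ + Real.sqrt B) ^ 2 * ‖x‖ ^ 2 :=
  perturbation_of_frame_is_frame_general f g A B hfsum hflow hfup hgsum μ hpert hμA
end

section
/- Let H be an infinite-dimensional complex Hilbert space, let {f_k}_{k∈ℕ} and {g_k}_{k∈ℕ} be frames for H whose frame operators satisfy S_F = K₁ + I and S_G = K₂ + I with K₁, K₂ compact operators, and suppose there is a subset σ ⊆ ℕ such that {f_k}_{k∈σ} and {g_k}_{k∈σᶜ} are each orthonormal (Hilbert) bases of H. Then the weaving {f_k}_{k∈σᶜ} ∪ {g_k}_{k∈σ} is not a frame for H: there is no constant C > 0 with C‖f‖² ≤ ∑_{k∈σᶜ} |⟨f,f_k⟩|² + ∑_{k∈σ} |⟨f,g_k⟩|² for all f ∈ H. In particular, {f_k}_{k∈ℕ} and {g_k}_{k∈ℕ} are not woven. -/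
/-!
Restricting the identities `S_F = K₁ + I` and `S_G = K₂ + I` to the orthonormal bases
`{f k}_{k ∈ σ}` and `{g k}_{k ∈ σᶜ}` shows that the frame operator of the weaving
`{f k}_{k ∈ σᶜ} ∪ {g k}_{k ∈ σ}` is the compact operator `K₁ + K₂`. A lower frame bound would
make this operator bounded below, and a compact operator bounded below pulls a compact set back to
a neighbourhood of `0`, which by Riesz's theorem forces `H` to be finite dimensional.
-/

open scoped NNReal InnerProductSpace

theorem HasSum.hasSum_subtype_of_add_compl {α β : Type*} [AddCommGroup α] [TopologicalSpace α]
    [IsTopologicalAddGroup α] {f : β → α} {s : Set β} {a b : α} (h : HasSum f (a + b))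
    (hb : HasSum (f ∘ (↑) : ↑sᶜ → α) b) : HasSum (f ∘ (↑) : s → α) a := by
  rw [hasSum_subtype_iff_indicator] at hb ⊢
  simpa only [Set.indicator_compl, Pi.sub_apply, sub_sub_cancel, add_sub_cancel_right] using
    h.sub hb

theorem HasSum.hasSum_norm_inner_sq {𝕜 E ι : Type*} [RCLike 𝕜] [NormedAddCommGroup E]
    [InnerProductSpace 𝕜 E] {v : ι → E} {x y : E} (h : HasSum (fun k ↦ ⟪v k, x⟫_𝕜 • v k) y) :
    HasSum (fun k ↦ ‖⟪v k, x⟫_𝕜‖ ^ 2) (RCLike.re ⟪y, x⟫_𝕜) := by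
  have hinner : HasSum (fun k ↦ ((‖⟪v k, x⟫_𝕜‖ ^ 2 : ℝ) : 𝕜)) ⟪x, y⟫_𝕜 := by
    refine ((innerSL 𝕜 x).hasSum h).congr_fun fun k ↦ ?_
    rw [innerSL_apply_apply, inner_smul_right, ← inner_conj_symm x (v k), RCLike.mul_conj]
    norm_cast
  simpa only [RCLike.reCLM_apply, RCLike.ofReal_re, inner_re_symm x y] using
    RCLike.reCLM.hasSum hinner

theorem IsCompactOperator.finiteDimensional_of_antilipschitz {𝕜 E F : Type*}
    [NontriviallyNormedField 𝕜] [CompleteSpace 𝕜] [NormedAddCommGroup E] [NormedSpace 𝕜 E]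
    [NormedAddCommGroup F] [NormedSpace 𝕜 F] {T : E →L[𝕜] F} {K : ℝ≥0}
    (hT : IsCompactOperator T) (hK : AntilipschitzWith K T) : FiniteDimensional 𝕜 E := by
  obtain ⟨V, hV, hVnhds⟩ := hT
  exact .of_totallyBounded_nhds_zero 𝕜 hVnhds <|
    totallyBounded_preimage (hK.isUniformInducing T.uniformContinuous) hV.totallyBounded

theorem compact_tight_frames_not_woven_general
    {H : Type*} [NormedAddCommGroup H] [InnerProductSpace ℂ H] [CompleteSpace H]
    (hinf : ¬ FiniteDimensional ℂ H)
    (f g : ℕ → H)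
    -- the frame operators satisfy `S_F = K₁ + I` and `S_G = K₂ + I`, `K₁, K₂` compact:
    (K₁ K₂ : H →L[ℂ] H)
    (hK₁ : IsCompactOperator ⇑K₁) (hK₂ : IsCompactOperator ⇑K₂)
    (hSF : ∀ x : H, HasSum (fun k => (inner ℂ (f k) x : ℂ) • f k) (K₁ x + x))
    (hSG : ∀ x : H, HasSum (fun k => (inner ℂ (g k) x : ℂ) • g k) (K₂ x + x))
    -- `{f k}_{k ∈ σ}` and `{g k}_{k ∈ σᶜ}` are orthonormal bases:
    (σ : Set ℕ)
    (hfT : ∀ x : H, HasSum (fun k : σ => (inner ℂ (f ↑k) x : ℂ) • f ↑k) x)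
    (hgT : ∀ x : H, HasSum (fun k : ↥σᶜ => (inner ℂ (g ↑k) x : ℂ) • g ↑k) x) :
    -- the weaving `{f k}_{k ∈ σᶜ} ∪ {g k}_{k ∈ σ}` is not a frame:
    ¬ ∃ C₀ : ℝ, 0 < C₀ ∧ ∀ x : H,
      C₀ * ‖x‖ ^ 2 ≤ (∑' k : ↥σᶜ, ‖(inner ℂ (f ↑k) x : ℂ)‖ ^ 2) +
        ∑' k : ↥σ, ‖(inner ℂ (g ↑k) x : ℂ)‖ ^ 2 := by
  rintro ⟨C₀, hC₀, hweave⟩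
  lift C₀ to ℝ≥0 using hC₀.le
  have hF (x : H) : HasSum (fun k : ↥σᶜ ↦ ⟪f k, x⟫_ℂ • f k) (K₁ x) :=
    HasSum.hasSum_compl_iff (f := fun k ↦ ⟪f k, x⟫_ℂ • f k) (hfT x) |>.2
      (add_comm (K₁ x) x ▸ hSF x)
  have hG (x : H) : HasSum (fun k : σ ↦ ⟪g k, x⟫_ℂ • g k) (K₂ x) :=
    HasSum.hasSum_subtype_of_add_compl (f := fun k ↦ ⟪g k, x⟫_ℂ • g k) (hSG x) (hgT x)
  have hbelow (x : H) : ‖x‖ ^ 2 * C₀ ≤ ‖⟪(K₁ + K₂) x, x⟫_ℂ‖ :=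
    calc ‖x‖ ^ 2 * C₀ ≤ RCLike.re ⟪K₁ x, x⟫_ℂ + RCLike.re ⟪K₂ x, x⟫_ℂ := by
          rw [mul_comm, ← (hF x).hasSum_norm_inner_sq.tsum_eq,
            ← (hG x).hasSum_norm_inner_sq.tsum_eq]
          exact hweave x
      _ = RCLike.re ⟪(K₁ + K₂) x, x⟫_ℂ := by
          rw [add_apply, inner_add_left, map_add]
      _ ≤ ‖⟪(K₁ + K₂) x, x⟫_ℂ‖ := RCLike.re_le_norm _
  have hcompact : IsCompactOperator ⇑(K₁ + K₂) := hK₁.add hK₂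
  exact hinf <| hcompact.finiteDimensional_of_antilipschitz
    (ContinuousLinearMap.antilipschitz_of_forall_le_inner_map _ hC₀ hbelow)

/-- Let `H` be an infinite-dimensional complex Hilbert space, let `{f k}` and `{g k}` be
frames for `H` whose frame operators satisfy `S_F = K₁ + I` and `S_G = K₂ + I` with
`K₁, K₂` compact, and suppose there is a subset `σ ⊆ ℕ` such that `{f k}_{k ∈ σ}` and
`{g k}_{k ∈ σᶜ}` are each orthonormal (Hilbert) bases of `H`.  Then the weaving
`{f k}_{k ∈ σᶜ} ∪ {g k}_{k ∈ σ}` is not a frame for `H`: there is no constant `C > 0`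
with `C‖x‖² ≤ ∑_{k ∈ σᶜ} |⟨x, f k⟩|² + ∑_{k ∈ σ} |⟨x, g k⟩|²` for all `x`.
(In particular, `{f k}` and `{g k}` are not woven.) -/
theorem compact_tight_frames_not_woven
    {H : Type*} [NormedAddCommGroup H] [InnerProductSpace ℂ H] [CompleteSpace H]
    (hinf : ¬ FiniteDimensional ℂ H)
    (f g : ℕ → H) (A B C D : ℝ) (hA : 0 < A) (hAB : A ≤ B) (hC : 0 < C) (hCD : C ≤ D)
    -- `{f k}` is a frame with bounds `A` and `B`:
    (hfsum : ∀ x : H, Summable (fun k => ‖(inner ℂ (f k) x : ℂ)‖ ^ 2))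
    (hflow : ∀ x : H, A * ‖x‖ ^ 2 ≤ ∑' k, ‖(inner ℂ (f k) x : ℂ)‖ ^ 2)
    (hfup : ∀ x : H, ∑' k, ‖(inner ℂ (f k) x : ℂ)‖ ^ 2 ≤ B * ‖x‖ ^ 2)
    -- `{g k}` is a frame with bounds `C` and `D`:
    (hgsum : ∀ x : H, Summable (fun k => ‖(inner ℂ (g k) x : ℂ)‖ ^ 2))
    (hglow : ∀ x : H, C * ‖x‖ ^ 2 ≤ ∑' k, ‖(inner ℂ (g k) x : ℂ)‖ ^ 2)
    (hgup : ∀ x : H, ∑' k, ‖(inner ℂ (g k) x : ℂ)‖ ^ 2 ≤ D * ‖x‖ ^ 2)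
    -- the frame operators satisfy `S_F = K₁ + I` and `S_G = K₂ + I`, `K₁, K₂` compact:
    (K₁ K₂ : H →L[ℂ] H)
    (hK₁ : IsCompactOperator ⇑K₁) (hK₂ : IsCompactOperator ⇑K₂)
    (hSF : ∀ x : H, HasSum (fun k => (inner ℂ (f k) x : ℂ) • f k) (K₁ x + x))
    (hSG : ∀ x : H, HasSum (fun k => (inner ℂ (g k) x : ℂ) • g k) (K₂ x + x))
    -- `{f k}_{k ∈ σ}` and `{g k}_{k ∈ σᶜ}` are orthonormal bases:
    (σ : Set ℕ)
    (hfO : Orthonormal ℂ (fun k : σ => f ↑k))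
    (hfT : ∀ x : H, HasSum (fun k : σ => (inner ℂ (f ↑k) x : ℂ) • f ↑k) x)
    (hgO : Orthonormal ℂ (fun k : ↥σᶜ => g ↑k))
    (hgT : ∀ x : H, HasSum (fun k : ↥σᶜ => (inner ℂ (g ↑k) x : ℂ) • g ↑k) x) :
    -- the weaving `{f k}_{k ∈ σᶜ} ∪ {g k}_{k ∈ σ}` is not a frame:
    ¬ ∃ C₀ : ℝ, 0 < C₀ ∧ ∀ x : H,
      C₀ * ‖x‖ ^ 2 ≤ (∑' k : ↥σᶜ, ‖(inner ℂ (f ↑k) x : ℂ)‖ ^ 2) +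
        ∑' k : ↥σ, ‖(inner ℂ (g ↑k) x : ℂ)‖ ^ 2 :=
  compact_tight_frames_not_woven_general hinf f g K₁ K₂ hK₁ hK₂ hSF hSG σ hfT hgT
end
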